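/- For the sequence (n_k)_{k≥1} of the explicit construction, let a, b ∈ ℕ be such that a/b = 2^r for some r ∈ ℤ \ {0}. Then there is a constant C (depending only on ε, R, d, a, b) such that for every i ≥ 1, every m ∈ {1,…,M(i)}, and c := 2^(2^(i⁴))·b·m·(2^r − 1), one has |#{(k,ℓ) : k,ℓ ∈ Δ_i, a·n_k − b·n_ℓ = c} − (R^i/⌈i^{1−ε}⌉ − r)| ≤ C·i². -/

import Mathlib

/-!
Write `a = 2^s b` with `s = |r|` (swapping the roles of `k` and `l` when `r < 0`). Dividing by
`b 2^(2^(i^4))`, a solution `(k, l)` with `k ∈ Δ_i^(m₁)` and `l ∈ Δ_i^(m₂)` satisfies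
`2^(k+s) - 2^l = 2^s (m - m₁) + (m₂ - m)`. The right-hand side is `O(2^s i)`, far below
`2^(min Δ_i)`, so `l = k + s`. If `k` and `k + s` lie in the same part, the equation becomes
`(2^s - 1)(m - m₁) = 0`, so `m₁ = m`, and every such `k ∈ Δ_i^(m)` is a solution; otherwise `k` is one
of the last `s` elements of its part, which happens for at most `s M(i) ≤ s i` values of `k`.
Hence the count is `#Δ_i^(m) - s + O(s i)` with `#Δ_i^(m) = R^i / M(i) + O(1)`; the finitely many
`i < s + 2` only affect the constant.
-/

open Real MeasureTheory Filter Finset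

noncomputable section

/-- The block `Δ_i` of `R^i` consecutive positive integers. -/
def Block (R i : ℕ) : Finset ℕ :=
  Finset.Icc ((R ^ i - R) / (R - 1) + 1) ((R ^ (i + 1) - R) / (R - 1))

/-- `M(i) = ⌈i^(1-ε)⌉`. -/
def Mfun (ε : ℝ) (i : ℕ) : ℕ := ⌈(i : ℝ) ^ (1 - ε)⌉₊

/-- The explicit construction: parameters `ε ∈ (0,1)`, an integer `R > 8/ε`, an integer
`d ≥ 1`, for each `i ≥ 1` a partition of `Δ_i` into consecutive intervals of integers
`Δ_i^(1) < ⋯ < Δ_i^(M(i))` (element-wise) of essentially equal cardinality, and the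
sequence `n_k := 2^(2^(i^4)) * (2^k + m)` for `k ∈ Δ_i^(m)`. -/
structure ExplicitConstruction where
  ε : ℝ
  R : ℕ
  d : ℕ
  sub : ℕ → ℕ → Finset ℕ
  n : ℕ → ℕ
  hε : ε ∈ Set.Ioo (0 : ℝ) 1
  hR : 8 / ε < (R : ℝ)
  hd : 1 ≤ d
  hpart : ∀ i, 1 ≤ i → Block R i = (Finset.Icc 1 (Mfun ε i)).biUnion (sub i)
  hconsec : ∀ i, 1 ≤ i → ∀ m ∈ Finset.Icc 1 (Mfun ε i), ∃ lo hi, sub i m = Finset.Icc lo hi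
  horder : ∀ i, 1 ≤ i → ∀ m ∈ Finset.Icc 1 (Mfun ε i), ∀ m' ∈ Finset.Icc 1 (Mfun ε i),
    m < m' → ∀ k ∈ sub i m, ∀ l ∈ sub i m', k < l
  hcard : ∀ i, 1 ≤ i → ∀ m ∈ Finset.Icc 1 (Mfun ε i),
    |((sub i m).card : ℝ) - (R : ℝ) ^ i / (Mfun ε i : ℝ)| ≤ 1
  hn : ∀ i, 1 ≤ i → ∀ m ∈ Finset.Icc 1 (Mfun ε i), ∀ k ∈ sub i m,
    n k = 2 ^ 2 ^ i ^ 4 * (2 ^ k + m)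

lemma eq_of_abs_two_pow_sub_two_pow_lt {x y n : ℕ} (hx : n ≤ x) (hy : n ≤ y)
    (h : |(2 : ℤ) ^ x - 2 ^ y| < 2 ^ n) : x = y := by
  by_contra hxy
  wlog hlt : x < y generalizing x y
  · exact this hy hx (by rwa [abs_sub_comm]) (Ne.symm hxy) (by omega)
  have h1 : (2 : ℤ) ^ (x + 1) ≤ 2 ^ y := pow_le_pow_right₀ one_le_two hlt
  have h2 : (2 : ℤ) ^ n ≤ 2 ^ x := pow_le_pow_right₀ one_le_two hx
  linarith [neg_abs_le ((2 : ℤ) ^ x - 2 ^ y), pow_succ (2 : ℤ) x]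

lemma card_filter_add_notMem_Icc_le (lo up s : ℕ) :
    #{k ∈ Icc lo up | k + s ∉ Icc lo up} ≤ s :=
  calc #{k ∈ Icc lo up | k + s ∉ Icc lo up} ≤ #(Icc (up + 1 - s) up) :=
        card_le_card fun k => by simp only [mem_Icc, mem_filter]; omega
    _ ≤ s := by rw [Nat.card_Icc]; omega

lemma card_Icc_le_card_filter_add_mem_add (lo up s : ℕ) :
    #(Icc lo up) ≤ #{k ∈ Icc lo up | k + s ∈ Icc lo up} + s := by
  rw [← card_filter_add_card_filter_not (fun k => k + s ∈ Icc lo up)]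
  exact Nat.add_le_add_left (card_filter_add_notMem_Icc_le lo up s) _

lemma pow_pred_le_of_mem_Block {R i k : ℕ} (hR : 2 ≤ R) (hi : 1 ≤ i) (hk : k ∈ Block R i) :
    R ^ (i - 1) ≤ k := by
  have hpow : R ^ i = R ^ (i - 1) * R := by rw [← pow_succ]; congr 1; omega
  have : R ^ (i - 1) - 1 ≤ (R ^ i - R) / (R - 1) := by
    rw [Nat.le_div_iff_mul_le (by omega), hpow]
    calc (R ^ (i - 1) - 1) * (R - 1) ≤ (R ^ (i - 1) - 1) * R := Nat.mul_le_mul_left _ (by omega)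
      _ = R ^ (i - 1) * R - R := by rw [Nat.sub_mul, one_mul]
  have := (mem_Icc.mp hk).1
  omega

lemma card_Block_le (R i : ℕ) : #(Block R i) ≤ R ^ (i + 1) := by
  rw [Block, Nat.card_Icc]
  have := Nat.div_le_self (R ^ (i + 1) - R) (R - 1)
  generalize (R ^ (i + 1) - R) / (R - 1) = q at this ⊢
  generalize (R ^ i - R) / (R - 1) = q'
  omega

lemma one_le_Mfun {ε : ℝ} (hε : ε ≤ 1) {i : ℕ} (hi : 1 ≤ i) : 1 ≤ Mfun ε i :=
  Nat.one_le_ceil_iff.mpr (lt_of_lt_of_le one_pos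
    (Real.one_le_rpow (by exact_mod_cast hi) (by linarith)))

lemma Mfun_le {ε : ℝ} (hε : 0 ≤ ε) {i : ℕ} (hi : 1 ≤ i) : Mfun ε i ≤ i := by
  rw [Mfun, Nat.ceil_le]
  calc (i : ℝ) ^ (1 - ε) ≤ (i : ℝ) ^ (1 : ℝ) :=
        Real.rpow_le_rpow_of_exponent_le (by exact_mod_cast hi) (by linarith)
    _ = i := Real.rpow_one _

lemma eq_mul_two_pow_of_div_eq {a b s : ℕ} (h : (a : ℝ) / b = 2 ^ s) : b ≠ 0 ∧ a = b * 2 ^ s := by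
  have hb : b ≠ 0 := by
    rintro rfl
    rw [Nat.cast_zero, div_zero] at h
    exact absurd h.symm (by positivity)
  refine ⟨hb, ?_⟩
  rw [div_eq_iff (by positivity)] at h
  exact_mod_cast h.trans (mul_comm _ _)

namespace ExplicitConstruction

variable (E : ExplicitConstruction) {s i m : ℕ}

lemma eight_lt_R : 8 < E.R := by
  obtain ⟨hε0, hε1⟩ := E.hε
  have : (8 : ℝ) < 8 / E.ε := by rw [lt_div_iff₀ hε0]; linarith
  exact_mod_cast this.trans E.hR

lemma sub_subset_Block (hi : 1 ≤ i) (hm : m ∈ Icc 1 (Mfun E.ε i)) : E.sub i m ⊆ Block E.R i := by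
  rw [E.hpart i hi]
  exact subset_biUnion_of_mem _ hm

lemma exists_mem_sub (hi : 1 ≤ i) {k : ℕ} (hk : k ∈ Block E.R i) :
    ∃ m ∈ Icc 1 (Mfun E.ε i), k ∈ E.sub i m := by
  rw [E.hpart i hi] at hk
  exact mem_biUnion.mp hk

/-- The set of `(k, l) ∈ Δ_i²` with `a n_k - b n_l = 2^(2^(i^4)) b m (2^s - 1)` when `a = 2^s b`,
after dividing the equation by `b`. -/
def shiftSolutions (s i m : ℕ) : Finset (ℕ × ℕ) :=
  (Block E.R i ×ˢ Block E.R i).filter fun p =>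
    2 ^ s * (E.n p.1 : ℤ) - E.n p.2 = 2 ^ 2 ^ i ^ 4 * m * (2 ^ s - 1)

lemma two_pow_sub_two_pow_eq (hi : 1 ≤ i) {k l m₁ m₂ : ℕ}
    (hkl : (k, l) ∈ E.shiftSolutions s i m) (hm₁ : m₁ ∈ Icc 1 (Mfun E.ε i))
    (hm₂ : m₂ ∈ Icc 1 (Mfun E.ε i)) (hk : k ∈ E.sub i m₁) (hl : l ∈ E.sub i m₂) :
    (2 : ℤ) ^ (k + s) - 2 ^ l = 2 ^ s * ((m : ℤ) - m₁) + ((m₂ : ℤ) - m) := by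
  have h := (mem_filter.mp hkl).2
  rw [E.hn i hi m₁ hm₁ k hk, E.hn i hi m₂ hm₂ l hl] at h
  push_cast at h
  apply mul_left_cancel₀ (pow_ne_zero (2 ^ i ^ 4) (two_ne_zero : (2 : ℤ) ≠ 0))
  linear_combination h

lemma shift_mem_shiftSolutions (hi : 1 ≤ i) (hm : m ∈ Icc 1 (Mfun E.ε i)) {k : ℕ}
    (hk : k ∈ E.sub i m) (hks : k + s ∈ E.sub i m) : (k, k + s) ∈ E.shiftSolutions s i m := by
  refine mem_filter.mpr
    ⟨mem_product.mpr ⟨E.sub_subset_Block hi hm hk, E.sub_subset_Block hi hm hks⟩, ?_⟩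
  rw [E.hn i hi m hm k hk, E.hn i hi m hm _ hks]
  push_cast
  ring

lemma eq_of_shift_mem_shiftSolutions (hs : 1 ≤ s) (hi : 1 ≤ i) {k m₁ : ℕ}
    (hp : (k, k + s) ∈ E.shiftSolutions s i m) (hm₁ : m₁ ∈ Icc 1 (Mfun E.ε i))
    (hk : k ∈ E.sub i m₁) (hks : k + s ∈ E.sub i m₁) : m₁ = m := by
  have h := E.two_pow_sub_two_pow_eq hi hp hm₁ hm₁ hk hks
  have h2s : (1 : ℤ) < 2 ^ s := one_lt_pow₀ one_lt_two (by omega)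
  have : ((m : ℤ) - m₁) * (2 ^ s - 1) = 0 := by linear_combination -h
  have := (mul_eq_zero.mp this).resolve_right (by linarith)
  omega

lemma snd_eq_add_of_mem_shiftSolutions (hi : s + 2 ≤ i) (hm : m ∈ Icc 1 (Mfun E.ε i))
    {p : ℕ × ℕ} (hp : p ∈ E.shiftSolutions s i m) : p.2 = p.1 + s := by
  obtain ⟨k, l⟩ := p
  have hkl := mem_product.mp (mem_filter.mp hp).1
  obtain ⟨m₁, hm₁, hk⟩ := E.exists_mem_sub (by omega) hkl.1
  obtain ⟨m₂, hm₂, hl⟩ := E.exists_mem_sub (by omega) hkl.2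
  have heq := E.two_pow_sub_two_pow_eq (by omega) hp hm₁ hm₂ hk hl
  -- `k` and `l` exceed `i + s` by far, while the right-hand side of `heq` is below `2^(i + s + 1)`
  have hexp : i + s + 1 ≤ E.R ^ (i - 1) :=
    calc i + s + 1 ≤ 1 + (i - 1) * 2 := by omega
      _ ≤ 3 ^ (i - 1) :=
        one_add_mul_le_pow_of_sq_nonneg (by positivity) (by positivity) (by positivity) _
      _ ≤ E.R ^ (i - 1) := Nat.pow_le_pow_left (by linarith [E.eight_lt_R]) _
  have hk' := pow_pred_le_of_mem_Block (by linarith [E.eight_lt_R]) (by omega) hkl.1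
  have hl' := pow_pred_le_of_mem_Block (by linarith [E.eight_lt_R]) (by omega) hkl.2
  have hM : (Mfun E.ε i : ℤ) < 2 ^ i := by
    exact_mod_cast (Mfun_le E.hε.1.le (by omega)).trans_lt Nat.lt_two_pow_self
  have hm' := mem_Icc.mp hm
  have hm₁' := mem_Icc.mp hm₁
  have hm₂' := mem_Icc.mp hm₂
  have h1 : |(m : ℤ) - m₁| < 2 ^ i := abs_sub_lt_iff.mpr ⟨by omega, by omega⟩
  have h2 : |(m₂ : ℤ) - m| < 2 ^ i := abs_sub_lt_iff.mpr ⟨by omega, by omega⟩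
  refine (eq_of_abs_two_pow_sub_two_pow_lt (n := i + s + 1) (by omega) (by omega) ?_).symm
  rw [heq]
  calc |2 ^ s * ((m : ℤ) - m₁) + ((m₂ : ℤ) - m)|
      ≤ 2 ^ s * |(m : ℤ) - m₁| + |(m₂ : ℤ) - m| := by
        rw [← abs_of_pos (pow_pos two_pos s : (0 : ℤ) < 2 ^ s), ← abs_mul, abs_pow, abs_two]
        exact abs_add_le _ _
    _ < 2 ^ s * 2 ^ i + 2 ^ i := by gcongr
    _ ≤ 2 ^ (i + s + 1) := by
        have : (1 : ℤ) ≤ 2 ^ s := one_le_pow₀ one_le_two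
        rw [pow_succ, pow_add]
        nlinarith [pow_pos (two_pos : (0 : ℤ) < 2) i]

lemma card_sub_le_card_shiftSolutions_add (hi : 1 ≤ i) (hm : m ∈ Icc 1 (Mfun E.ε i)) :
    #(E.sub i m) ≤ #(E.shiftSolutions s i m) + s := by
  obtain ⟨lo, up, hsub⟩ := E.hconsec i hi m hm
  calc #(E.sub i m) ≤ #{k ∈ E.sub i m | k + s ∈ E.sub i m} + s := by
        rw [hsub]; exact card_Icc_le_card_filter_add_mem_add lo up s
    _ ≤ #(E.shiftSolutions s i m) + s := by
        gcongr
        refine card_le_card_of_injOn (fun k => (k, k + s)) (fun k hk => ?_)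
          fun k _ l _ h => congrArg Prod.fst h
        have hk := mem_filter.mp hk
        exact E.shift_mem_shiftSolutions hi hm hk.1 hk.2

lemma card_shiftSolutions_le (hs : 1 ≤ s) (hi : s + 2 ≤ i) (hm : m ∈ Icc 1 (Mfun E.ε i)) :
    #(E.shiftSolutions s i m) ≤ #(E.sub i m) + s * Mfun E.ε i := by
  -- a solution `(k, k + s)` has `k ∈ Δ_i^(m)`, unless `k` is among the last `s` elements of its part
  let lastOf (m' : ℕ) : Finset ℕ := {k ∈ E.sub i m' | k + s ∉ E.sub i m'}
  calc #(E.shiftSolutions s i m)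
      ≤ #(E.sub i m ∪ (Icc 1 (Mfun E.ε i)).biUnion lastOf) := by
        refine card_le_card_of_injOn Prod.fst (fun p hp => ?_) fun p hp q hq h => ?_
        · have hp' : (p.1, p.1 + s) ∈ E.shiftSolutions s i m := by
            rwa [← E.snd_eq_add_of_mem_shiftSolutions hi hm hp]
          have hB := (mem_product.mp (mem_filter.mp hp).1).1
          obtain ⟨m₁, hm₁, hk⟩ := E.exists_mem_sub (by omega) hB
          by_cases hks : p.1 + s ∈ E.sub i m₁
          · obtain rfl := E.eq_of_shift_mem_shiftSolutions hs (by omega) hp' hm₁ hk hks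
            exact mem_union_left _ hk
          · exact mem_union_right _ (mem_biUnion.mpr ⟨m₁, hm₁, mem_filter.mpr ⟨hk, hks⟩⟩)
        · exact Prod.ext h (by rw [E.snd_eq_add_of_mem_shiftSolutions hi hm hp,
            E.snd_eq_add_of_mem_shiftSolutions hi hm hq, h])
    _ ≤ #(E.sub i m) + ∑ m' ∈ Icc 1 (Mfun E.ε i), #(lastOf m') :=
        (card_union_le _ _).trans (Nat.add_le_add_left card_biUnion_le _)
    _ ≤ #(E.sub i m) + ∑ _m' ∈ Icc 1 (Mfun E.ε i), s := by
        gcongr with m' hm'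
        obtain ⟨lo, up, hsub⟩ := E.hconsec i (by omega) m' hm'
        simp only [lastOf, hsub]
        exact card_filter_add_notMem_Icc_le lo up s
    _ = #(E.sub i m) + s * Mfun E.ε i := by simp [mul_comm]

lemma abs_card_shiftSolutions_sub_le (hs : 1 ≤ s) (hi : s + 2 ≤ i)
    (hm : m ∈ Icc 1 (Mfun E.ε i)) {r : ℝ} (hr : |r| = s) :
    |(#(E.shiftSolutions s i m) : ℝ) - ((E.R : ℝ) ^ i / Mfun E.ε i - r)| ≤ (2 * s + 1) * i := by
  have hlow : (#(E.sub i m) : ℝ) ≤ #(E.shiftSolutions s i m) + s := by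
    exact_mod_cast E.card_sub_le_card_shiftSolutions_add (by omega) hm
  have hup : (#(E.shiftSolutions s i m) : ℝ) ≤ #(E.sub i m) + s * Mfun E.ε i := by
    exact_mod_cast E.card_shiftSolutions_le hs hi hm
  have hcard := abs_le.mp (E.hcard i (by omega) m hm)
  have hsM : (s : ℝ) * Mfun E.ε i ≤ s * i := by
    gcongr; exact_mod_cast Mfun_le E.hε.1.le (by omega)
  have hi1 : (1 : ℝ) ≤ i := by norm_cast; omega
  have hsi : (s : ℝ) ≤ s * i := le_mul_of_one_le_right (by positivity) hi1
  have hr' := abs_le.mp hr.le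
  rw [abs_le]
  constructor <;> linarith

lemma abs_card_shiftSolutions_sub_le_pow (hi : 1 ≤ i) (r : ℝ) :
    |(#(E.shiftSolutions s i m) : ℝ) - ((E.R : ℝ) ^ i / Mfun E.ε i - r)|
      ≤ 2 * (E.R : ℝ) ^ (2 * (i + 1)) + |r| := by
  have hcard : (#(E.shiftSolutions s i m) : ℝ) ≤ (E.R : ℝ) ^ (2 * (i + 1)) := by
    have : #(E.shiftSolutions s i m) ≤ E.R ^ (i + 1) * E.R ^ (i + 1) :=
      calc #(E.shiftSolutions s i m) ≤ #(Block E.R i ×ˢ Block E.R i) := card_filter_le _ _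
        _ = #(Block E.R i) * #(Block E.R i) := card_product _ _
        _ ≤ E.R ^ (i + 1) * E.R ^ (i + 1) := Nat.mul_le_mul (card_Block_le _ _) (card_Block_le _ _)
    rw [← pow_two, ← pow_mul, mul_comm] at this
    exact_mod_cast this
  have hR : (1 : ℝ) ≤ E.R := by exact_mod_cast (E.eight_lt_R).le.trans' (by norm_num)
  have hx : (E.R : ℝ) ^ i / Mfun E.ε i ≤ (E.R : ℝ) ^ (2 * (i + 1)) :=
    (div_le_self (by positivity) (by exact_mod_cast one_le_Mfun E.hε.2.le hi)).trans
      (pow_le_pow_right₀ hR (by omega))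
  have hx0 : 0 ≤ (E.R : ℝ) ^ i / Mfun E.ε i := by positivity
  rw [abs_le]
  constructor <;> linarith [le_abs_self r, neg_abs_le r, (#(E.shiftSolutions s i m)).cast_nonneg' (α := ℝ)]

def solutionSet (a b : ℕ) (r : ℤ) (i m : ℕ) : Set (ℕ × ℕ) :=
  {p | p.1 ∈ Block E.R i ∧ p.2 ∈ Block E.R i ∧
    (a : ℝ) * E.n p.1 - b * E.n p.2 = (2 : ℝ) ^ 2 ^ i ^ 4 * b * m * ((2 : ℝ) ^ r - 1)}

lemma solutionSet_natCast {a b : ℕ} (hb : b ≠ 0) (hab : a = b * 2 ^ s) :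
    E.solutionSet a b s i m = E.shiftSolutions s i m := by
  ext ⟨k, l⟩
  simp only [solutionSet, shiftSolutions, coe_filter, mem_product, Set.mem_ofPred_eq, and_assoc,
    zpow_natCast, hab]
  refine and_congr_right fun _ => and_congr_right fun _ => ?_
  rw [← Int.cast_inj (α := ℝ)]
  push_cast
  have hb' : (b : ℝ) ≠ 0 := by exact_mod_cast hb
  constructor
  · intro h
    apply mul_left_cancel₀ hb'
    linear_combination h
  · intro h
    linear_combination (b : ℝ) * h

lemma solutionSet_neg {a b : ℕ} (ha : a ≠ 0) (hba : b = a * 2 ^ s) :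
    E.solutionSet a b (-s) i m = Prod.swap ⁻¹' E.shiftSolutions s i m := by
  ext ⟨k, l⟩
  simp only [solutionSet, shiftSolutions, coe_filter, mem_product, Set.mem_preimage,
    Set.mem_ofPred_eq, Prod.fst_swap, Prod.snd_swap, zpow_neg, zpow_natCast, hba]
  rw [← and_assoc, and_comm (a := k ∈ Block E.R i) (b := l ∈ Block E.R i)]
  refine and_congr_right fun _ => ?_
  rw [← Int.cast_inj (α := ℝ)]
  push_cast
  have ha' : (a : ℝ) ≠ 0 := by exact_mod_cast ha
  have h2s : (2 : ℝ) ^ s * ((2 : ℝ) ^ s)⁻¹ = 1 := mul_inv_cancel₀ (by positivity)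
  constructor
  · intro h
    apply mul_left_cancel₀ ha'
    linear_combination -h - (2 : ℝ) ^ 2 ^ i ^ 4 * a * m * h2s
  · intro h
    linear_combination -(a : ℝ) * h - (2 : ℝ) ^ 2 ^ i ^ 4 * a * m * h2s

end ExplicitConstruction

theorem statement3_general (E : ExplicitConstruction) (a b : ℕ)
    (r : ℤ) (hr : r ≠ 0) (hpow : (a : ℝ) / (b : ℝ) = (2:ℝ) ^ r) :
    ∃ C : ℝ, ∀ i : ℕ, 1 ≤ i → ∀ m ∈ Finset.Icc 1 (Mfun E.ε i),
      |(({p : ℕ × ℕ | p.1 ∈ Block E.R i ∧ p.2 ∈ Block E.R i ∧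
            (a : ℝ) * (E.n p.1 : ℝ) - (b : ℝ) * (E.n p.2 : ℝ)
              = (2:ℝ) ^ 2 ^ i ^ 4 * b * m * ((2:ℝ) ^ r - 1)}.ncard : ℝ)
          - ((E.R : ℝ) ^ i / (Mfun E.ε i : ℝ) - (r : ℝ)))| ≤ C * (i : ℝ) ^ 2 := by
  obtain ⟨s, hs, hrs, hcount⟩ : ∃ s : ℕ, 1 ≤ s ∧ |(r : ℝ)| = s ∧
      ∀ i m, (E.solutionSet a b r i m).ncard = #(E.shiftSolutions s i m) := by
    obtain ⟨s, rfl | rfl⟩ := Int.eq_nat_or_neg r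
    · obtain ⟨hb, hab⟩ := eq_mul_two_pow_of_div_eq (by rwa [zpow_natCast] at hpow)
      refine ⟨s, by omega, by simp, fun i m => ?_⟩
      rw [E.solutionSet_natCast hb hab, Set.ncard_coe_finset]
    · obtain ⟨ha, hba⟩ := eq_mul_two_pow_of_div_eq (a := b) (b := a)
        (by rw [← inv_div, hpow, zpow_neg, zpow_natCast, inv_inv])
      refine ⟨s, by omega, by simp, fun i m => ?_⟩
      rw [E.solutionSet_neg ha hba, Set.ncard_preimage_of_injective_subset_range
        Prod.swap_injective (by simp [Prod.swap_surjective.range_eq]), Set.ncard_coe_finset]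
  set B : ℝ := 2 * (E.R : ℝ) ^ (2 * (s + 2)) + s
  refine ⟨2 * s + 1 + B, fun i hi m hm => ?_⟩
  change |((E.solutionSet a b r i m).ncard : ℝ) - _| ≤ _
  rw [hcount]
  have hi' : (1 : ℝ) ≤ i := by exact_mod_cast hi
  have hB : 0 ≤ B := by positivity
  calc _ ≤ (2 * s + 1 + B) * i := ?_
    _ ≤ (2 * s + 1 + B) * i ^ 2 := by gcongr; nlinarith
  rcases le_or_gt (s + 2) i with hbig | hsmall
  · exact (E.abs_card_shiftSolutions_sub_le hs hbig hm hrs).trans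
      (mul_le_mul_of_nonneg_right (by linarith) (by positivity))
  · have hR : (1 : ℝ) ≤ E.R := by exact_mod_cast (E.eight_lt_R).le.trans' (by norm_num)
    have := pow_le_pow_right₀ hR (show 2 * (i + 1) ≤ 2 * (s + 2) by omega)
    calc _ ≤ 2 * (E.R : ℝ) ^ (2 * (i + 1)) + |(r : ℝ)| := E.abs_card_shiftSolutions_sub_le_pow hi _
      _ ≤ B := by rw [hrs]; linarith
      _ ≤ (2 * s + 1 + B) * i := by nlinarith

/-- Lemma 2.1 (iii)(a): if `a/b = 2^r` with `r ≠ 0` and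
`c = 2^(2^(i^4)) b m (2^r - 1)` for some `m ∈ {1, …, M(i)}`, then the number of solutions
`k, ℓ ∈ Δ_i` of `a n_k - b n_ℓ = c` equals `R^i/⌈i^(1-ε)⌉ - r` up to an error `O(i²)`. -/
theorem statement3 (E : ExplicitConstruction) (a b : ℕ) (ha : 1 ≤ a) (hb : 1 ≤ b)
    (r : ℤ) (hr : r ≠ 0) (hpow : (a : ℝ) / (b : ℝ) = (2:ℝ) ^ r) :
    ∃ C : ℝ, ∀ i : ℕ, 1 ≤ i → ∀ m ∈ Finset.Icc 1 (Mfun E.ε i),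
      |(({p : ℕ × ℕ | p.1 ∈ Block E.R i ∧ p.2 ∈ Block E.R i ∧
            (a : ℝ) * (E.n p.1 : ℝ) - (b : ℝ) * (E.n p.2 : ℝ)
              = (2:ℝ) ^ 2 ^ i ^ 4 * b * m * ((2:ℝ) ^ r - 1)}.ncard : ℝ)
          - ((E.R : ℝ) ^ i / (Mfun E.ε i : ℝ) - (r : ℝ)))| ≤ C * (i : ℝ) ^ 2 :=
  statement3_general E a b r hr hpow
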